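/- Let (Ω, 𝓕, P) be a probability space with Ω a standard Borel space, K, m ≥ 1, and let Z : Ω → Fin K, X, Y, Y₀, Y₁ : Ω → Bool, U : Ω → Fin m be measurable and satisfy consistency. Fix i : Bool and set Y_i := if i then Y₁ else Y₀. Assume U and Z are independent (IndepFun) and Y_i is conditionally independent of the pair ⟨X, Z⟩ given the σ-algebra generated by U (CondIndepFun). Then for every z : Fin K with P(Z = z) > 0 and every y : Bool: P(Y_i = y) ≤ P[{Y = y} ∩ {X = i} | {Z = z}] + P[{X = !i} | {Z = z}]. -/

import Mathlib

open MeasureTheory ProbabilityTheory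

/-- The marginal inequality (marg) under IV assumption (iv)
(`U ⫫ Z` and `Y(x_i) ⫫ (X, Z) | U`), part of the proof that φ(M₄) ⊆ 𝒯 in Theorem 1:
`P(Y(x_i) = y) ≤ P(Y = y, X = i | Z = z) + P(X = 1 - i | Z = z)`. -/
theorem iv_marginal_bound_M4
    {Ω : Type*} [MeasurableSpace Ω] [StandardBorelSpace Ω]
    (P : Measure Ω) [IsProbabilityMeasure P]
    {K m : ℕ} (hK : 1 ≤ K) (hm : 1 ≤ m)
    (Z : Ω → Fin K) (X Y Y₀ Y₁ : Ω → Bool) (U : Ω → Fin m)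
    (hZ : Measurable Z) (hX : Measurable X) (hY : Measurable Y)
    (hY₀ : Measurable Y₀) (hY₁ : Measurable Y₁) (hU : Measurable U)
    (hcons : ∀ᵐ ω ∂P, Y ω = if X ω then Y₁ ω else Y₀ ω)
    (i : Bool)
    (hUZ : IndepFun U Z P)
    (hci : CondIndepFun (MeasurableSpace.comap U inferInstance) hU.comap_le
      (fun ω => if i then Y₁ ω else Y₀ ω) (fun ω => (X ω, Z ω)) P) :
    ∀ (z : Fin K), 0 < P {ω | Z ω = z} →
      ∀ y : Bool,
        P {ω | (if i then Y₁ ω else Y₀ ω) = y}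
          ≤ P[{ω | Y ω = y} ∩ {ω | X ω = i} | {ω | Z ω = z}]
            + P[{ω | X ω = !i} | {ω | Z ω = z}] := by
  intro z hz y
  set Yi : Ω → Bool := fun ω => if i then Y₁ ω else Y₀ ω with hYidef
  have hYi : Measurable Yi := by cases i <;> simpa [Yi] using ‹_›
  set A : Set Ω := {ω | Yi ω = y} with hA
  set B : Set Ω := {ω | Z ω = z} with hB
  have hAm : MeasurableSet A := hYi (measurableSet_singleton y)
  have hBm : MeasurableSet B := hZ (measurableSet_singleton z)
  -- Step 1: Yi is conditionally independent of Z given σ(U).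
  have hciZ : CondIndepFun (MeasurableSpace.comap U inferInstance) hU.comap_le Yi Z P := by
    have := hci.comp measurable_id (measurable_snd (α := Bool) (β := Fin K))
    exact this
  -- Step 2: P(A ∩ B) = P A * P B.
  have hindep : P (A ∩ B) = P A * P B := by
    have h1 := (condIndepFun_iff_condExp_inter_preimage_eq_mul (μ := P)
      (hm' := hU.comap_le) hYi hZ).mp hciZ {y} {z}
      (measurableSet_singleton y) (measurableSet_singleton z)
    have hAB : Yi ⁻¹' {y} = A := rfl
    have hBB : Z ⁻¹' {z} = B := rfl
    rw [hAB, hBB] at h1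
    -- conditional expectation of the indicator of B given σ(U) is constant P B
    have h2 : (P⟦B | MeasurableSpace.comap U inferInstance⟧) =ᵐ[P] fun _ => (P B).toReal := by
      have hsm : StronglyMeasurable[MeasurableSpace.comap Z inferInstance]
          (B.indicator (fun _ => (1 : ℝ))) := by
        refine StronglyMeasurable.indicator stronglyMeasurable_const ?_
        exact ⟨{z}, measurableSet_singleton z, rfl⟩
      have hind : Indep (MeasurableSpace.comap Z inferInstance)
          (MeasurableSpace.comap U inferInstance) P := hUZ.symm
      have h := condExp_indep_eq (μ := P) hZ.comap_le hU.comap_le hsm hind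
      refine h.trans ?_
      filter_upwards with ω
      rw [integral_indicator_const (1 : ℝ) hBm]
      simp [measureReal_def]
    have h3 : (P⟦A ∩ B | MeasurableSpace.comap U inferInstance⟧) =ᵐ[P]
        fun ω => (P⟦A | MeasurableSpace.comap U inferInstance⟧) ω * (P B).toReal := by
      refine h1.trans ?_
      filter_upwards [h2] with ω h2ω
      rw [h2ω]
    have h4 : (P (A ∩ B)).toReal = (P A).toReal * (P B).toReal := by
      have hint : ∫ ω, (P⟦A ∩ B | MeasurableSpace.comap U inferInstance⟧) ω ∂P
          = (P (A ∩ B)).toReal := by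
        rw [integral_condExp hU.comap_le]
        rw [integral_indicator_const (1 : ℝ) (hAm.inter hBm)]
        simp [measureReal_def]
      rw [← hint, integral_congr_ae h3, integral_mul_const,
        integral_condExp hU.comap_le, integral_indicator_const (1 : ℝ) hAm]
      simp [measureReal_def]
    have hfin : ∀ s : Set Ω, P s ≠ ⊤ := fun s => measure_ne_top P s
    rw [← ENNReal.toReal_eq_toReal_iff' (hfin _) (ENNReal.mul_ne_top (hfin _) (hfin _)),
      ENNReal.toReal_mul]
    exact h4
  -- Step 3: P(A ∩ B) ≤ P (B ∩ S₁) + P (B ∩ S₂).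
  set S₁ : Set Ω := {ω | Y ω = y} ∩ {ω | X ω = i} with hS₁
  set S₂ : Set Ω := {ω | X ω = !i} with hS₂
  have hsub : P (A ∩ B) ≤ P (B ∩ S₁) + P (B ∩ S₂) := by
    refine le_trans (measure_mono_ae ?_) (measure_union_le _ _)
    filter_upwards [hcons] with ω hω hωAB
    obtain ⟨hωA, hωB⟩ := hωAB
    by_cases hXi : X ω = i
    · left
      refine ⟨hωB, ?_, hXi⟩
      have hYY : Y ω = Yi ω := by rw [hω, hXi]
      show Y ω = y
      rw [hYY]; exact hωA
    · right
      exact ⟨hωB, by cases hx : X ω <;> cases i <;> simp_all⟩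
  -- Step 4: conclude.
  have hb0 : P B ≠ 0 := ne_of_gt hz
  have hbt : P B ≠ ⊤ := measure_ne_top P B
  rw [cond_apply hBm, cond_apply hBm]
  have hPA : P A = (P B)⁻¹ * P (A ∩ B) := by
    rw [hindep, mul_comm (P A), ← mul_assoc, ENNReal.inv_mul_cancel hb0 hbt, one_mul]
  rw [hPA, ← mul_add]
  exact mul_le_mul_right hsub _
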